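/- arXiv:1110.6036 — 2 statements merged into one kernel-verified Lean document; each statement's English description precedes it below -/
import Mathlib

section
/- If σ is a local minimum of H for single-spin flips (H(σ^x) ≥ H(σ) for every site x), then for every nonempty subset I of the even sublattice, H(σ^I) ≥ H(σ). -/
/-!
Write `H` as a sum of bond terms `-(J/2) s_x s_{x+e}` and field terms `-(h/2) s_x`. Each term sees
at most one site of a set `I` with no two adjacent sites, so its change under flipping `I` is the
sum of its changes under the single flips at the sites of `I`. Summing over terms,
`H(σ^I) - H(σ) = ∑_{y ∈ I} (H(σ^y) - H(σ))`, and every summand is nonnegative at a single-flip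
minimum. The even sublattice has no two adjacent sites because the sides of the torus are even.
-/

open Finset

abbrev Site (L M : ℕ) := ZMod (2*L) × ZMod (2*M)

abbrev Config (L M : ℕ) := Site L M → Bool

def spin (b : Bool) : ℤ := if b then 1 else -1

def flipC {L M : ℕ} (σ : Config L M) (I : Finset (Site L M)) : Config L M :=
  fun x => if x ∈ I then !(σ x) else σ x

noncomputable def ham {L M : ℕ} [NeZero L] [NeZero M] (J h : ℝ) (σ : Config L M) : ℝ :=
  -(J/2) * ∑ x : Site L M,
      ((spin (σ x) * spin (σ (x + (1,0))) + spin (σ x) * spin (σ (x + (0,1))) : ℤ) : ℝ)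
    - (h/2) * ∑ x : Site L M, ((spin (σ x) : ℤ) : ℝ)

def evens (L M : ℕ) [NeZero L] [NeZero M] : Finset (Site L M) :=
  univ.filter fun x => Even (x.1.val + x.2.val)

def odds (L M : ℕ) [NeZero L] [NeZero M] : Finset (Site L M) :=
  univ.filter fun x => ¬ Even (x.1.val + x.2.val)

def adj {L M : ℕ} (x y : Site L M) : Prop :=
  y = x + (1,0) ∨ x = y + (1,0) ∨ y = x + (0,1) ∨ x = y + (0,1)

section Flip

variable {L M : ℕ}

lemma flipC_apply_of_notMem (σ : Config L M) {I : Finset (Site L M)} {x : Site L M}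
    (hx : x ∉ I) : flipC σ I x = σ x := by
  simp [flipC, hx]

lemma flipC_apply_eq_of_mem_iff (σ : Config L M) {I I' : Finset (Site L M)} {x : Site L M}
    (h : x ∈ I ↔ x ∈ I') : flipC σ I x = flipC σ I' x := by
  simp [flipC, h]

def FlipAdditive (F : Config L M → ℝ) (σ : Config L M) (I : Finset (Site L M)) : Prop :=
  F (flipC σ I) - F σ = ∑ y ∈ I, (F (flipC σ {y}) - F σ)

variable {σ : Config L M} {I : Finset (Site L M)}

lemma FlipAdditive.add {F G : Config L M → ℝ} (hF : FlipAdditive F σ I)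
    (hG : FlipAdditive G σ I) : FlipAdditive (fun τ => F τ + G τ) σ I := by
  unfold FlipAdditive at *
  rw [show F (flipC σ I) + G (flipC σ I) - (F σ + G σ)
      = (F (flipC σ I) - F σ) + (G (flipC σ I) - G σ) by ring, hF, hG, ← sum_add_distrib]
  exact sum_congr rfl fun _ _ => by ring

lemma FlipAdditive.sum {ι : Type*} {F : ι → Config L M → ℝ} {s : Finset ι}
    (hF : ∀ i ∈ s, FlipAdditive (F i) σ I) : FlipAdditive (fun τ => ∑ i ∈ s, F i τ) σ I := by
  unfold FlipAdditive at *
  simp_rw [← sum_sub_distrib]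
  rw [sum_congr rfl hF, sum_comm]

lemma flipAdditive_of_local {F : Config L M → ℝ} {S : Finset (Site L M)}
    (hF : ∀ τ τ' : Config L M, (∀ x ∈ S, τ x = τ' x) → F τ = F τ') (hI : #(I ∩ S) ≤ 1) :
    FlipAdditive F σ I := by
  unfold FlipAdditive
  have flip_off_S : ∀ y ∉ S, F (flipC σ {y}) = F σ := fun y hy =>
    hF _ _ fun x hx => flipC_apply_of_notMem σ (mem_singleton.not.2 (ne_of_mem_of_not_mem hx hy))
  rcases (I ∩ S).eq_empty_or_nonempty with hIS | ⟨x, hx⟩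
  · have hLHS : F (flipC σ I) = F σ := hF _ _ fun z hz =>
      flipC_apply_of_notMem σ fun hzI => eq_empty_iff_forall_notMem.1 hIS z (mem_inter.2 ⟨hzI, hz⟩)
    rw [hLHS, sub_self, sum_eq_zero fun y hy => by
      rw [flip_off_S y fun hyS => eq_empty_iff_forall_notMem.1 hIS y (mem_inter.2 ⟨hy, hyS⟩),
        sub_self]]
  · have hxI : x ∈ I := (mem_inter.1 hx).1
    have only_x : ∀ y ∈ I, y ∈ S → y = x := fun y hyI hyS =>
      card_le_one.1 hI y (mem_inter.2 ⟨hyI, hyS⟩) x hx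
    rw [sum_eq_single_of_mem x hxI fun y hy hyx => by
      rw [flip_off_S y fun hyS => hyx (only_x y hy hyS), sub_self]]
    congr 1
    exact hF _ _ fun z hz => flipC_apply_eq_of_mem_iff σ
      ⟨fun hzI => mem_singleton.2 (only_x z hzI hz), fun h => mem_singleton.1 h ▸ hxI⟩

lemma flipAdditive_pair (ψ : Bool → Bool → ℝ) {x z : Site L M} (h : ¬(x ∈ I ∧ z ∈ I)) :
    FlipAdditive (fun τ => ψ (τ x) (τ z)) σ I :=
  flipAdditive_of_local (S := {x, z}) (fun τ τ' hτ => by rw [hτ x (by simp), hτ z (by simp)])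
    (card_le_one.2 fun a ha b hb => by grind)

lemma flipAdditive_site (φ : Bool → ℝ) (x : Site L M) : FlipAdditive (fun τ => φ (τ x)) σ I :=
  flipAdditive_of_local (S := {x}) (fun τ τ' hτ => by rw [hτ x (mem_singleton_self x)])
    ((card_le_card inter_subset_right).trans (card_singleton x).le)

end Flip

section Torus

variable {L M : ℕ} [NeZero L] [NeZero M]

lemma ham_eq_sum (J h : ℝ) : ham (L := L) (M := M) J h = fun σ => ∑ x,
    (-(J/2) * spin (σ x) * spin (σ (x + (1,0))) + -(J/2) * spin (σ x) * spin (σ (x + (0,1)))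
      + -(h/2) * spin (σ x)) := by
  funext σ
  rw [ham, mul_sum, mul_sum, ← sum_sub_distrib]
  exact sum_congr rfl fun x _ => by push_cast; ring

lemma flipAdditive_ham (J h : ℝ) (σ : Config L M) {I : Finset (Site L M)}
    (hI : ∀ x ∈ I, ∀ y ∈ I, ¬ adj x y) : FlipAdditive (ham J h) σ I := by
  rw [ham_eq_sum]
  exact FlipAdditive.sum fun x _ =>
    ((flipAdditive_pair (fun a b => -(J/2) * spin a * spin b) fun h => hI _ h.1 _ h.2 (.inl rfl)).add
      (flipAdditive_pair (fun a b => -(J/2) * spin a * spin b) fun h =>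
        hI _ h.1 _ h.2 (.inr (.inr (.inl rfl))))).add
      (flipAdditive_site (fun a => -(h/2) * spin a) x)

lemma val_add_one_mod_two {n : ℕ} [NeZero n] (a : ZMod (2 * n)) :
    (a + 1).val % 2 = (a.val + 1) % 2 := by
  have : Fact (1 < 2 * n) := ⟨by have := NeZero.pos n; omega⟩
  rw [ZMod.val_add, ZMod.val_one, Nat.mod_mod_of_dvd _ (dvd_mul_right 2 n)]

lemma add_one_zero_notMem_evens {x : Site L M} (hx : x ∈ evens L M) :
    x + (1, 0) ∉ evens L M := by
  have := val_add_one_mod_two x.1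
  simp only [evens, mem_filter, mem_univ, true_and, Nat.even_iff, Prod.fst_add, Prod.snd_add,
    add_zero] at hx ⊢
  omega

lemma add_zero_one_notMem_evens {x : Site L M} (hx : x ∈ evens L M) :
    x + (0, 1) ∉ evens L M := by
  have := val_add_one_mod_two x.2
  simp only [evens, mem_filter, mem_univ, true_and, Nat.even_iff, Prod.fst_add, Prod.snd_add,
    add_zero] at hx ⊢
  omega

lemma not_adj_of_mem_evens {x y : Site L M} (hx : x ∈ evens L M) (hy : y ∈ evens L M) :
    ¬ adj x y := by
  rintro (rfl | rfl | rfl | rfl)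
  · exact add_one_zero_notMem_evens hx hy
  · exact add_one_zero_notMem_evens hy hx
  · exact add_zero_one_notMem_evens hx hy
  · exact add_zero_one_notMem_evens hy hx

end Torus

theorem single_flip_min_implies_even_parallel_min_general {L M : ℕ} [NeZero L] [NeZero M]
    (J h : ℝ) (σ : Config L M)
    (hmin : ∀ x : Site L M, ham J h σ ≤ ham J h (flipC σ {x})) :
    ∀ I : Finset (Site L M), I.Nonempty → I ⊆ evens L M →
      ham J h σ ≤ ham J h (flipC σ I) := by
  intro I _ hI
  have hadd : FlipAdditive (ham J h) σ I :=
    flipAdditive_ham J h σ fun x hx y hy => not_adj_of_mem_evens (hI hx) (hI hy)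
  have hsingle : 0 ≤ ∑ y ∈ I, (ham J h (flipC σ {y}) - ham J h σ) :=
    sum_nonneg fun y _ => sub_nonneg.2 (hmin y)
  rw [FlipAdditive] at hadd
  linarith

/-- a single-spin-flip local minimum is stable under any simultaneous flip
of a nonempty subset of the even sublattice. -/
theorem single_flip_min_implies_even_parallel_min {L M : ℕ} [NeZero L] [NeZero M]
    (J h : ℝ) (hJ : 0 < J) (hh : 0 < h) (σ : Config L M)
    (hmin : ∀ x : Site L M, ham J h σ ≤ ham J h (flipC σ {x})) :
    ∀ I : Finset (Site L M), I.Nonempty → I ⊆ evens L M →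
      ham J h σ ≤ ham J h (flipC σ I) :=
  single_flip_min_implies_even_parallel_min_general J h σ hmin
end

section
/- The configuration with all spins minus and the configuration with all spins plus are both local minima of H for the alternate dynamics, and H(+1) < H(−1) whenever h > 0 (so −1 is not the global minimum). -/
open Finset

def rectConf (L M : ℕ) [NeZero L] [NeZero M] (a b : ℕ) : Config L M :=
  fun x => decide (∃ i < a, ∃ j < b, x = ((i : ZMod (2*L)), ((j : ZMod (2*M)))))

def allMinus (L M : ℕ) : Config L M := fun _ => false

/-! Two sites of one sublattice are never neighbours, so flipping a set `I` inside one
sublattice of a constant configuration `b` reverses exactly the `4 |I|` bonds at `I`, each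
once. Hence `H(flip_I b) = H(b) + (4J + h spin b) |I|`, which is at least `H(b)` as soon as
`4J ≥ h`, while `H(+1) - H(-1) = -h |Λ|`. -/

lemma ZMod.even_val_add_one_iff {n : ℕ} [NeZero n] (hn : Even n) (a : ZMod n) :
    Even (a + 1).val ↔ ¬ Even a.val := by
  obtain ⟨k, rfl⟩ := hn
  have : Fact (1 < k + k) := ⟨by have := NeZero.pos (k + k); omega⟩
  rw [ZMod.val_add, ZMod.val_one, Nat.even_iff, Nat.even_iff,
    Nat.mod_mod_of_dvd _ ⟨k, (two_mul k).symm⟩]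
  omega

lemma sum_boole_add_right_mem {G R : Type*} [AddGroup G] [Fintype G] [DecidableEq G]
    [AddCommMonoidWithOne R]
    (I : Finset G) (e : G) : ∑ x, (if x + e ∈ I then (1 : R) else 0) = #I := by
  rw [Fintype.sum_equiv (Equiv.addRight e) (fun x => if x + e ∈ I then (1 : R) else 0)
    (fun y => if y ∈ I then 1 else 0) fun _ => rfl]
  simp

@[simp] lemma spin_true : spin true = 1 := rfl

@[simp] lemma spin_false : spin false = -1 := rfl

lemma spin_mul_self (b : Bool) : spin b * spin b = 1 := by
  cases b <;> rfl

section Torus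

variable {L M : ℕ}

lemma flipC_empty (σ : Config L M) : flipC σ ∅ = σ := by
  funext x
  simp [flipC]

lemma spin_flipC_const (b : Bool) (I : Finset (Site L M)) (x : Site L M) :
    spin (flipC (fun _ => b) I x) = spin b * (1 - 2 * if x ∈ I then 1 else 0) := by
  unfold flipC
  split_ifs <;> cases b <;> rfl

variable [NeZero L] [NeZero M]

lemma even_parity_add_unit_iff (x e : Site L M) (he : e = (1, 0) ∨ e = (0, 1)) :
    Even ((x + e).1.val + (x + e).2.val) ↔ ¬ Even (x.1.val + x.2.val) := by
  have hL : Even (2 * L) := even_two_mul L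
  have hM : Even (2 * M) := even_two_mul M
  rcases he with rfl | rfl
  · simp only [Prod.fst_add, Prod.snd_add, add_zero, Nat.even_add,
      ZMod.even_val_add_one_iff hL]
    tauto
  · simp only [Prod.fst_add, Prod.snd_add, add_zero, Nat.even_add,
      ZMod.even_val_add_one_iff hM]
    tauto

lemma add_notMem_of_subset_sublattice {I : Finset (Site L M)}
    (hI : I ⊆ evens L M ∨ I ⊆ odds L M) {e : Site L M} (he : e = (1, 0) ∨ e = (0, 1))
    {x : Site L M} (hx : x ∈ I) : x + e ∉ I := by
  intro hxe
  have hpar := even_parity_add_unit_iff x e he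
  rcases hI with hI | hI
  · have h₁ := hI hx; have h₂ := hI hxe
    simp only [evens, mem_filter_univ] at h₁ h₂
    exact hpar.mp h₂ h₁
  · have h₁ := hI hx; have h₂ := hI hxe
    simp only [odds, mem_filter_univ] at h₁ h₂
    exact h₂ (hpar.mpr h₁)

lemma sum_spin_flipC_const (b : Bool) (I : Finset (Site L M)) :
    ∑ x, spin (flipC (fun _ => b) I x) = spin b * (Fintype.card (Site L M) - 2 * #I) := by
  simp [spin_flipC_const, ← Finset.mul_sum, Finset.sum_sub_distrib, mul_comm]

lemma sum_spin_mul_spin_flipC_const (b : Bool) {I : Finset (Site L M)} {e : Site L M}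
    (hI : ∀ x ∈ I, x + e ∉ I) :
    ∑ x, spin (flipC (fun _ => b) I x) * spin (flipC (fun _ => b) I (x + e))
      = Fintype.card (Site L M) - 4 * #I := by
  have hbond : ∀ x, spin (flipC (fun _ => b) I x) * spin (flipC (fun _ => b) I (x + e))
      = 1 - 2 * (if x ∈ I then 1 else 0) - 2 * (if x + e ∈ I then 1 else 0) := by
    intro x
    have hb := spin_mul_self b
    rw [spin_flipC_const, spin_flipC_const]
    by_cases hx : x ∈ I
    · simp only [hx, hI x hx, if_true, if_false]
      linear_combination (-1 : ℤ) * hb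
    · by_cases hxe : x + e ∈ I
      · simp only [hx, hxe, if_true, if_false]
        linear_combination (-1 : ℤ) * hb
      · simp only [hx, hxe, if_false]
        linear_combination hb
  rw [Finset.sum_congr rfl fun x _ => hbond x, Finset.sum_sub_distrib, Finset.sum_sub_distrib,
    ← Finset.mul_sum, ← Finset.mul_sum, sum_boole_add_right_mem, Finset.sum_boole]
  simp
  ring

lemma ham_flipC_const (J h : ℝ) (b : Bool) {I : Finset (Site L M)}
    (hI : I ⊆ evens L M ∨ I ⊆ odds L M) :
    ham J h (flipC (fun _ => b) I)
      = -(J + h / 2 * spin b) * Fintype.card (Site L M) + (4 * J + h * spin b) * #I := by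
  have hbond {e : Site L M} (he : e = (1, 0) ∨ e = (0, 1)) :
      ∑ x, spin (flipC (fun _ => b) I x) * spin (flipC (fun _ => b) I (x + e))
        = Fintype.card (Site L M) - 4 * #I :=
    sum_spin_mul_spin_flipC_const b fun _ hx => add_notMem_of_subset_sublattice hI he hx
  unfold ham
  rw [← Int.cast_sum, ← Int.cast_sum, Finset.sum_add_distrib, hbond (Or.inl rfl),
    hbond (Or.inr rfl), sum_spin_flipC_const]
  push_cast
  ring

lemma ham_const (J h : ℝ) (b : Bool) :
    ham J h (fun _ => b : Config L M) = -(J + h / 2 * spin b) * Fintype.card (Site L M) := by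
  simpa [flipC_empty] using
    ham_flipC_const J h b (Or.inl (empty_subset (evens L M)))

lemma ham_flipC_const_eq (J h : ℝ) (b : Bool) {I : Finset (Site L M)}
    (hI : I ⊆ evens L M ∨ I ⊆ odds L M) :
    ham J h (flipC (fun _ => b) I)
      = ham J h (fun _ => b : Config L M) + (4 * J + h * spin b) * #I := by
  rw [ham_flipC_const J h b hI, ham_const]

end Torus

/-- the all-minus and all-plus configurations are local minima for the
alternate dynamics, and H(+1) < H(−1). -/
theorem all_minus_all_plus_local_minima {L M : ℕ} [NeZero L] [NeZero M]
    (J h : ℝ) (hh : 0 < h) (hJ : 2*h < J) :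
    (∀ I : Finset (Site L M), I.Nonempty → (I ⊆ evens L M ∨ I ⊆ odds L M) →
      ham J h (allMinus L M) ≤ ham J h (flipC (allMinus L M) I)) ∧
    (∀ I : Finset (Site L M), I.Nonempty → (I ⊆ evens L M ∨ I ⊆ odds L M) →
      ham J h (fun _ => true : Config L M) ≤ ham J h (flipC (fun _ => true) I)) ∧
    ham J h (fun _ => true : Config L M) < ham J h (allMinus L M) := by
  have hminus : allMinus L M = fun _ => false := rfl
  refine ⟨fun I _ hI => ?_, fun I _ hI => ?_, ?_⟩
  · rw [hminus, ham_flipC_const_eq J h false hI, spin_false]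
    refine le_add_of_nonneg_right (mul_nonneg ?_ (Nat.cast_nonneg _))
    push_cast
    linarith
  · rw [ham_flipC_const_eq J h true hI, spin_true]
    refine le_add_of_nonneg_right (mul_nonneg ?_ (Nat.cast_nonneg _))
    push_cast
    linarith
  · have hcard : (0 : ℝ) < Fintype.card (Site L M) := by exact_mod_cast Fintype.card_pos
    rw [hminus, ham_const, ham_const, spin_true, spin_false]
    push_cast
    linarith [mul_pos hh hcard]
end
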